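/- The merge operator on local types is commutative: for all local types T1 and T2, T1 ⊔ T2 is defined if and only if T2 ⊔ T1 is defined, and when both are defined they are equal. -/

import Mathlib

/-- Local types T ::= end | base B | p?{lᵢ⟨Uᵢ⟩.Tᵢ} | p!{lᵢ⟨Uᵢ⟩.Tᵢ} | ∀α.T | ∃α.T | @_ω T | ↓α.T.
Payload types U (base types or local types) are embedded into local types via `base`.
Branchings/selections are represented as functions from labels to optional
(payload, continuation) pairs, which makes the pairwise-distinctness of labels implicit. -/
inductive LocalTy where
  | endT : LocalTy
  | base : String → LocalTy
  | recv : String → (String → Option (LocalTy × LocalTy)) → LocalTy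
  | send : String → (String → Option (LocalTy × LocalTy)) → LocalTy
  | all  : String → LocalTy → LocalTy
  | ex   : String → LocalTy → LocalTy
  | att  : String → LocalTy → LocalTy
  | here : String → LocalTy → LocalTy

mutual
/-- The partial merge operator: `Merge T1 T2 T` means T1 ⊔ T2 is defined and equals T.
B ⊔ B = B for base types; T ⊔ T = T for end, selection, @, ∀, ∃ types; branching types
from the same participant merge by taking the union of branches, recursively merging
payloads and continuations on common labels; undefined otherwise. -/
inductive Merge : LocalTy → LocalTy → LocalTy → Prop where
  | endT : Merge .endT .endT .endT
  | base (b : String) : Merge (.base b) (.base b) (.base b)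
  | send (p : String) (f : String → Option (LocalTy × LocalTy)) :
      Merge (.send p f) (.send p f) (.send p f)
  | all (a : String) (T : LocalTy) : Merge (.all a T) (.all a T) (.all a T)
  | ex (a : String) (T : LocalTy) : Merge (.ex a T) (.ex a T) (.ex a T)
  | att (w : String) (T : LocalTy) : Merge (.att w T) (.att w T) (.att w T)
  | recv (p : String) (f g h : String → Option (LocalTy × LocalTy)) :
      (∀ l, MergeO (f l) (g l) (h l)) → Merge (.recv p f) (.recv p g) (.recv p h)

/-- Merge of optional branches: a label present on only one side is kept as is;
a common label merges payloads and continuations. -/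
inductive MergeO : Option (LocalTy × LocalTy) → Option (LocalTy × LocalTy) →
    Option (LocalTy × LocalTy) → Prop where
  | none : MergeO none none none
  | left (b : LocalTy × LocalTy) : MergeO (some b) none (some b)
  | right (b : LocalTy × LocalTy) : MergeO none (some b) (some b)
  | both {U1 T1 U2 T2 U T : LocalTy} :
      Merge U1 U2 U → Merge T1 T2 T →
      MergeO (some (U1, T1)) (some (U2, T2)) (some (U, T))
end

mutual

theorem Merge.symm {T₁ T₂ T : LocalTy} : Merge T₁ T₂ T → Merge T₂ T₁ T
  | .endT => .endT
  | .base b => .base b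
  | .send p f => .send p f
  | .all a T => .all a T
  | .ex a T => .ex a T
  | .att w T => .att w T
  | .recv p f g h hfg => .recv p g f h fun l => (hfg l).symm

theorem MergeO.symm {o₁ o₂ o : Option (LocalTy × LocalTy)} : MergeO o₁ o₂ o → MergeO o₂ o₁ o
  | .none => .none
  | .left b => .right b
  | .right b => .left b
  | .both hU hT => .both hU.symm hT.symm

end

mutual

theorem Merge.unique {T₁ T₂ T T' : LocalTy} : Merge T₁ T₂ T → Merge T₁ T₂ T' → T = T'
  | .endT, .endT => rfl
  | .base _, .base _ => rfl
  | .send _ _, .send _ _ => rfl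
  | .all _ _, .all _ _ => rfl
  | .ex _ _, .ex _ _ => rfl
  | .att _ _, .att _ _ => rfl
  | .recv _ _ _ _ h, .recv _ _ _ _ h' => by
    congr 1
    funext l
    exact (h l).unique (h' l)

theorem MergeO.unique {o₁ o₂ o o' : Option (LocalTy × LocalTy)} :
    MergeO o₁ o₂ o → MergeO o₁ o₂ o' → o = o'
  | .none, .none => rfl
  | .left _, .left _ => rfl
  | .right _, .right _ => rfl
  | .both hU hT, .both hU' hT' => by rw [hU.unique hU', hT.unique hT']

end

/-- the merge operator is commutative: T1 ⊔ T2 is defined iff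
T2 ⊔ T1 is defined, and when both are defined they are equal. -/
theorem merge_comm (T1 T2 : LocalTy) :
    (∀ T, Merge T1 T2 T ↔ Merge T2 T1 T) ∧
    (∀ T T', Merge T1 T2 T → Merge T2 T1 T' → T = T') :=
  ⟨fun _ => ⟨Merge.symm, Merge.symm⟩, fun _ _ h h' => h.unique h'.symm⟩
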